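/- Let E be a finite family of subsets (hyperedges) of a finite vertex set V, x : E → ℝ≥0 a fractional edge cover (∑_{F ∋ v} x_F ≥ 1 for every v ∈ V), and for each F let N_F ≥ 1 be a positive real. Define AGM = ∏_F N_F^{x_F}. If for some vertex v one replaces each N_F with F ∋ v by a value N'_F ≤ N_F and drops the covering requirement at v, the new product ∏_F (N'_F)^{x_F} ≤ AGM · max_{F ∋ v} (N'_F/N_F). -/

import Mathlib

/-!
The edges through `v` are the only ones whose factor changes, and each of them shrinks by at
most `M = max_{F ∋ v} N'_F / N_F ≤ 1`. Their product therefore shrinks by at most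
`M ^ (∑_{F ∋ v} x_F)`, which is at most `M` because the exponent is at least `1` (the cover
condition at `v`) and `M ≤ 1`.
-/

open Finset

namespace Finset

theorem prod_rpow_le_mul_prod_rpow {ι : Type*} {t : Finset ι} {x a b : ι → ℝ} {M : ℝ}
    (hx : ∀ i ∈ t, 0 ≤ x i) (hsum : 1 ≤ ∑ i ∈ t, x i) (hM0 : 0 ≤ M) (hM1 : M ≤ 1)
    (ha : ∀ i ∈ t, 0 ≤ a i) (hb : ∀ i ∈ t, 0 ≤ b i) (hab : ∀ i ∈ t, a i ≤ M * b i) :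
    ∏ i ∈ t, a i ^ x i ≤ M * ∏ i ∈ t, b i ^ x i := by
  calc ∏ i ∈ t, a i ^ x i
      ≤ ∏ i ∈ t, (M * b i) ^ x i :=
        prod_le_prod (fun i hi => Real.rpow_nonneg (ha i hi) _)
          fun i hi => Real.rpow_le_rpow (ha i hi) (hab i hi) (hx i hi)
    _ = M ^ (∑ i ∈ t, x i) * ∏ i ∈ t, b i ^ x i := by
        rw [Real.rpow_sum_of_nonneg hM0 hx, ← prod_mul_distrib]
        exact prod_congr rfl fun i hi => Real.mul_rpow hM0 (hb i hi)
    _ ≤ M * ∏ i ∈ t, b i ^ x i :=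
        mul_le_mul_of_nonneg_right (Real.rpow_le_self_of_le_one hM0 hM1 hsum)
          (prod_nonneg fun i hi => Real.rpow_nonneg (hb i hi) _)

theorem le_sup'_div_mul {ι : Type*} {t : Finset ι} (ht : t.Nonempty) {a b : ι → ℝ} {i : ι}
    (hi : i ∈ t) (hb : 0 < b i) : a i ≤ t.sup' ht (fun j => a j / b j) * b i :=
  (div_le_iff₀ hb).1 (le_sup' (fun j => a j / b j) hi)

end Finset

/-- Binding one variable decreases the AGM bound by at least the maximum relative degree:
if `x` is a fractional edge cover, `N' F ≤ N F` for edges containing `v` (and `N' F = N F`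
otherwise), then `∏ F, (N' F)^(x F) ≤ (∏ F, (N F)^(x F)) · max_{F ∋ v} (N' F / N F)`. -/
theorem agm_residual_bound {ι V : Type*} [DecidableEq V]
    (s : Finset ι) (edge : ι → Finset V) (x : ι → ℝ) (Nn N' : ι → ℝ) (v : V)
    (hx : ∀ F ∈ s, 0 ≤ x F)
    (hN : ∀ F ∈ s, 1 ≤ Nn F)
    (hN'pos : ∀ F ∈ s, 0 < N' F)
    (hle : ∀ F ∈ s, v ∈ edge F → N' F ≤ Nn F)
    (heq : ∀ F ∈ s, v ∉ edge F → N' F = Nn F)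
    (hcover : 1 ≤ ∑ F ∈ s.filter (fun F => v ∈ edge F), x F)
    (hne : (s.filter (fun F => v ∈ edge F)).Nonempty) :
    ∏ F ∈ s, (N' F) ^ (x F) ≤
      (∏ F ∈ s, (Nn F) ^ (x F)) *
        (s.filter (fun F => v ∈ edge F)).sup' hne (fun F => N' F / Nn F) := by
  set t := s.filter (fun F => v ∈ edge F)
  set M := t.sup' hne (fun F => N' F / Nn F)
  have hts : ∀ F ∈ t, F ∈ s := fun F hF => (mem_filter.1 hF).1
  have hNpos : ∀ F ∈ s, 0 < Nn F := fun F hF => one_pos.trans_le (hN F hF)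
  have hM0 : 0 ≤ M := by
    obtain ⟨F, hF⟩ := hne
    exact (div_nonneg (hN'pos F (hts F hF)).le (hNpos F (hts F hF)).le).trans
      (le_sup' (fun F => N' F / Nn F) hF)
  have hM1 : M ≤ 1 := sup'_le _ _ fun F hF =>
    div_le_one_of_le₀ (hle F (hts F hF) (mem_filter.1 hF).2) (hNpos F (hts F hF)).le
  have hthrough : ∏ F ∈ t, N' F ^ x F ≤ M * ∏ F ∈ t, Nn F ^ x F :=
    prod_rpow_le_mul_prod_rpow (fun F hF => hx F (hts F hF)) hcover hM0 hM1
      (fun F hF => (hN'pos F (hts F hF)).le) (fun F hF => (hNpos F (hts F hF)).le)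
      fun F hF => le_sup'_div_mul hne hF (hNpos F (hts F hF))
  have haway : ∏ F ∈ s.filter (fun F => v ∉ edge F), N' F ^ x F =
      ∏ F ∈ s.filter (fun F => v ∉ edge F), Nn F ^ x F :=
    prod_congr rfl fun F hF => by rw [heq F (mem_filter.1 hF).1 (mem_filter.1 hF).2]
  rw [← prod_filter_mul_prod_filter_not s (fun F => v ∈ edge F) (fun F => N' F ^ x F),
    ← prod_filter_mul_prod_filter_not s (fun F => v ∈ edge F) (fun F => Nn F ^ x F), haway,
    mul_right_comm]
  exact mul_le_mul_of_nonneg_right (hthrough.trans_eq (mul_comm _ _))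
    (prod_nonneg fun F hF => Real.rpow_nonneg (hNpos F (mem_filter.1 hF).1).le _)
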